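/- arXiv:2004.08623 — 5 statements merged into one kernel-verified Lean document; each statement's English description precedes it below -/
import Mathlib

section
/- There exists a constant C > 0 (depending only on γ) such that for all n ≥ 1 and all real η, |a_n(η)| ≤ C/(1 + η²), where a_n(η) := (1/(n+1)) Σ_{k ∈ T̂_n} 2 sin²(πk)/(4 sin²(πk) − η² + 2iγη). -/
open Finset Complex

/-! Writing `u = 4 sin²(πk)` each summand is `u / (2z)` with `z = u - η² + 2iγη` and `0 ≤ u ≤ 4`.
Since `‖z‖` dominates both `|u - η²|` and `2γ|η|`, it suffices to bound `u (1 + η²)` by a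
combination of these two quantities, which is an elementary inequality for bounded `u`.
The average of the summands then obeys the same bound as each summand. -/

lemma mul_one_add_sq_le {M u x : ℝ} (hu : 0 ≤ u) (huM : u ≤ M) (hx : 0 ≤ x) :
    u * (1 + x ^ 2) ≤ (1 + M) * |u - x ^ 2| + (1 + M) ^ 2 * x := by
  rcases le_total (x ^ 2) u with hxu | hux
  · have hx_le : x ≤ 1 + M := by nlinarith
    rw [abs_of_nonneg (by linarith)]
    nlinarith [mul_le_mul hx_le (show 1 + x ^ 2 ≤ 1 + M by linarith) (by positivity) (by linarith)]
  · -- `u² ≤ M x²` gives `u ≤ (1 + M) x`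
    have hu_le : u ≤ (1 + M) * x := by nlinarith
    rw [abs_of_nonpos (by linarith)]
    nlinarith

lemma norm_div_resolvent_le {M γ u : ℝ} (hγ : 0 < γ) (hu : 0 ≤ u) (huM : u ≤ M) (η : ℝ) :
    ‖(u : ℂ) / (u - η ^ 2 + 2 * I * γ * η)‖
      ≤ ((1 + M) + (1 + M) ^ 2 / (2 * γ)) / (1 + η ^ 2) := by
  set z : ℂ := u - η ^ 2 + 2 * I * γ * η
  have hre : |u - η ^ 2| ≤ ‖z‖ := by
    simpa [z, pow_two] using abs_re_le_norm z
  have him : 2 * γ * |η| ≤ ‖z‖ := by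
    have hzim : z.im = 2 * γ * η := by simp [z, pow_two]
    have := abs_im_le_norm z
    rwa [hzim, abs_mul, abs_of_pos (by positivity : 0 < 2 * γ)] at this
  have hM : 0 ≤ M := hu.trans huM
  have key := mul_one_add_sq_le hu huM (abs_nonneg η)
  rw [sq_abs] at key
  rw [norm_div, norm_real, Real.norm_of_nonneg hu]
  rcases (norm_nonneg z).eq_or_lt with hz | hz
  · rw [← hz, div_zero]
    positivity
  rw [div_le_div_iff₀ hz (by positivity)]
  calc u * (1 + η ^ 2) ≤ (1 + M) * ‖z‖ + (1 + M) ^ 2 / (2 * γ) * (2 * γ * |η|) := by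
        have : (1 + M) ^ 2 / (2 * γ) * (2 * γ * |η|) = (1 + M) ^ 2 * |η| := by field_simp
        nlinarith
    _ ≤ (1 + M) * ‖z‖ + (1 + M) ^ 2 / (2 * γ) * ‖z‖ := by gcongr
    _ = _ := by ring

lemma norm_average_le {ι : Type*} {s : Finset ι} (hs : s.Nonempty) {f : ι → ℂ} {B : ℝ}
    (hf : ∀ i ∈ s, ‖f i‖ ≤ B) : ‖(1 / (#s : ℂ)) * ∑ i ∈ s, f i‖ ≤ B := by
  have hcard : (0 : ℝ) < #s := by exact_mod_cast hs.card_pos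
  rw [norm_mul, norm_div, norm_one, norm_natCast, one_div_mul_eq_div, div_le_iff₀' hcard]
  calc ‖∑ i ∈ s, f i‖ ≤ ∑ i ∈ s, ‖f i‖ := norm_sum_le _ _
    _ ≤ #s • B := sum_le_card_nsmul _ _ _ hf
    _ = #s * B := nsmul_eq_mul _ _

/-- There is `C > 0` (depending only on `γ`) with
`|a_n(η)| ≤ C/(1+η²)` for all `n ≥ 1` and all real `η`, where
`a_n(η) = (1/(n+1)) ∑_{k ∈ T̂_n} 2 sin²(πk)/(4 sin²(πk) − η² + 2iγη)`. -/
theorem stmt1 (γ : ℝ) (hγ : 0 < γ) :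
    ∃ C : ℝ, 0 < C ∧ ∀ n : ℕ, 1 ≤ n → ∀ η : ℝ,
      ‖(1 / ((n : ℂ) + 1)) * ∑ j ∈ Finset.range (n + 1),
          (2 * ((Real.sin (Real.pi * j / (n + 1)) : ℝ) : ℂ) ^ 2) /
            (4 * ((Real.sin (Real.pi * j / (n + 1)) : ℝ) : ℂ) ^ 2 - (η : ℂ) ^ 2
              + 2 * Complex.I * (γ : ℂ) * (η : ℂ))‖
        ≤ C / (1 + η ^ 2) := by
  refine ⟨((1 + 4) + (1 + 4) ^ 2 / (2 * γ)) / 2, by positivity, fun n _ η => ?_⟩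
  have hcard : ((#(range (n + 1)) : ℕ) : ℂ) = n + 1 := by simp
  rw [← hcard]
  refine norm_average_le nonempty_range_add_one fun j _ => ?_
  set u := 4 * Real.sin (Real.pi * j / (n + 1)) ^ 2
  have hu : 0 ≤ u := by positivity
  have huM : u ≤ 4 := by nlinarith [Real.sin_sq_le_one (Real.pi * j / (n + 1))]
  have hterm : (2 * ((Real.sin (Real.pi * j / (n + 1)) : ℝ) : ℂ) ^ 2) /
      (4 * ((Real.sin (Real.pi * j / (n + 1)) : ℝ) : ℂ) ^ 2 - (η : ℂ) ^ 2
        + 2 * Complex.I * (γ : ℂ) * (η : ℂ)) = (u : ℂ) / (u - η ^ 2 + 2 * I * γ * η) / 2 := by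
    push_cast [u]
    ring
  rw [hterm, norm_div, RCLike.norm_ofNat, div_right_comm]
  gcongr
  exact norm_div_resolvent_le hγ hu huM η
end

section
/- There is a constant C > 0 (depending only on γ) such that for all n ≥ 1 and η ∈ ℝ with 0 < η² < 8: (1/(n+1)) Σ_{k ∈ T̂_n} |sin(πk)| / (|η| + sin²(πk)) ≤ C log(1 + 1/|η|). -/
open Finset Real

/-! Write `|η| = a²`. Jordan's inequality gives `sin (π x) ≥ 2 min (x, 1 - x)` on `[0, 1]`, and
`s / (a² + s²) ≤ 1 / (a + s / 2)`, so the average is at most twice a right-endpoint Riemann sum of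
the decreasing function `1 / (a + x)` on `[0, 1]`, hence at most `2 log (1 + 1 / a)`; for `a ≤ 2`
this is at most `4 log (1 + 1 / a²)`. -/

lemma two_mul_le_sin_pi_mul {x : ℝ} (hx0 : 0 ≤ x) (hx : x ≤ 1 / 2) : 2 * x ≤ sin (π * x) := by
  have h := mul_le_sin (by positivity : 0 ≤ π * x) (by nlinarith [pi_pos])
  rwa [← mul_assoc, div_mul_cancel₀ _ pi_pos.ne'] at h

lemma two_mul_min_le_sin_pi_mul {x : ℝ} (hx0 : 0 ≤ x) (hx1 : x ≤ 1) :
    2 * min x (1 - x) ≤ sin (π * x) := by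
  rcases le_total x (1 / 2) with hx | hx
  · exact (mul_le_mul_of_nonneg_left (min_le_left _ _) zero_le_two).trans
      (two_mul_le_sin_pi_mul hx0 hx)
  · have h := two_mul_le_sin_pi_mul (sub_nonneg.2 hx1) (by linarith)
    rw [show π * (1 - x) = π - π * x by ring, sin_pi_sub] at h
    exact (mul_le_mul_of_nonneg_left (min_le_right _ _) zero_le_two).trans h

lemma div_sq_add_sq_le_inv_add {a s y : ℝ} (ha : 0 < a) (hy : 0 ≤ y) (hys : 2 * y ≤ s) :
    s / (a ^ 2 + s ^ 2) ≤ 1 / (a + y) := by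
  rw [div_le_div_iff₀ (by positivity) (by positivity)]
  nlinarith [sq_nonneg (a - s), mul_le_mul_of_nonneg_left hys (by linarith : 0 ≤ s)]

lemma abs_sin_pi_mul_div_le {a x : ℝ} (ha : 0 < a) (hx0 : 0 ≤ x) (hx1 : x ≤ 1) :
    |sin (π * x)| / (a ^ 2 + sin (π * x) ^ 2) ≤ 1 / (a + x) + 1 / (a + (1 - x)) := by
  have hsin := two_mul_min_le_sin_pi_mul hx0 hx1
  have hmin : 0 ≤ min x (1 - x) := le_min hx0 (by linarith)
  rw [abs_of_nonneg (by linarith)]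
  refine (div_sq_add_sq_le_inv_add ha hmin hsin).trans ?_
  rcases min_choice x (1 - x) with h | h <;> rw [h] <;>
    linarith [one_div_pos.2 (by linarith : 0 < a + x), one_div_pos.2 (by linarith : 0 < a + (1 - x))]

lemma sum_range_div_add_succ_mul_le_log {a h : ℝ} (ha : 0 < a) (hh : 0 ≤ h) (n : ℕ) :
    ∑ i ∈ range n, h / (a + (i + 1) * h) ≤ log (1 + n * h / a) := by
  induction n with
  | zero => simp
  | succ n ih =>
    have hlt : 0 < a + n * h := by positivity
    have hstep := one_sub_inv_le_log_of_pos (by positivity : 0 < (a + (n + 1) * h) / (a + n * h))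
    rw [log_div (by positivity) hlt.ne', inv_div] at hstep
    have hlog : log (1 + (n + 1) * h / a) - log (1 + n * h / a) =
        log (a + (n + 1) * h) - log (a + n * h) := by
      rw [← log_div (by positivity) (by positivity), ← log_div (by positivity) hlt.ne']
      congr 1
      field_simp
    rw [sum_range_succ, Nat.cast_succ]
    have : 1 - (a + n * h) / (a + (n + 1) * h) = h / (a + (n + 1) * h) := by
      field_simp; ring
    linarith

lemma average_abs_sin_div_le (a : ℝ) (ha : 0 < a) (n : ℕ) :
    (1 / ((n : ℝ) + 1)) * ∑ j ∈ range (n + 1),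
        |sin (π * j / (n + 1))| / (a ^ 2 + sin (π * j / (n + 1)) ^ 2)
      ≤ 2 * log (1 + 1 / a) := by
  obtain ⟨h, hdef⟩ : ∃ h : ℝ, h = 1 / ((n : ℝ) + 1) := ⟨_, rfl⟩
  rw [← hdef]
  have hpos : 0 < h := by rw [hdef]; positivity
  have hterm : ∀ i ∈ range n, h * (|sin (π * (i + 1 : ℕ) / (n + 1))| /
      (a ^ 2 + sin (π * (i + 1 : ℕ) / (n + 1)) ^ 2)) ≤
        h / (a + (i + 1) * h) + h / (a + ((n - 1 - i : ℕ) + 1) * h) := by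
    intro i hi
    have hin : i < n := mem_range.1 hi
    have hx : π * (i + 1 : ℕ) / (n + 1) = π * ((i + 1) * h) := by
      rw [hdef]; push_cast; ring
    have hcompl : ((n - 1 - i : ℕ) + 1) * h = 1 - (i + 1) * h := by
      rw [Nat.cast_sub (by omega), Nat.cast_sub (by omega), hdef]
      field_simp; push_cast; ring
    have hx1 : (i + 1) * h ≤ 1 := by
      rw [hdef, mul_one_div, div_le_one (by positivity)]
      exact_mod_cast Nat.succ_le_succ hin.le
    calc _ = h * (|sin (π * ((i + 1) * h))| / (a ^ 2 + sin (π * ((i + 1) * h)) ^ 2)) := by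
          rw [hx]
      _ ≤ h * (1 / (a + (i + 1) * h) + 1 / (a + (1 - (i + 1) * h))) :=
          mul_le_mul_of_nonneg_left (abs_sin_pi_mul_div_le ha (by positivity) hx1) hpos.le
      _ = _ := by rw [hcompl]; ring
  have hnh : (n : ℝ) * h ≤ 1 := by
    rw [hdef, mul_one_div, div_le_one (by positivity)]
    linarith
  rw [sum_range_succ']
  calc _ = ∑ i ∈ range n, h * (|sin (π * (i + 1 : ℕ) / (n + 1))| /
        (a ^ 2 + sin (π * (i + 1 : ℕ) / (n + 1)) ^ 2)) := by simp [mul_sum]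
    _ ≤ ∑ i ∈ range n, (h / (a + (i + 1) * h) + h / (a + ((n - 1 - i : ℕ) + 1) * h)) :=
        sum_le_sum hterm
    _ = 2 * ∑ i ∈ range n, h / (a + (i + 1) * h) := by
        rw [sum_add_distrib, sum_range_reflect (fun i : ℕ => h / (a + ((i : ℝ) + 1) * h)) n]
        ring
    _ ≤ 2 * log (1 + n * h / a) := by
        gcongr; exact sum_range_div_add_succ_mul_le_log ha hpos.le n
    _ ≤ 2 * log (1 + 1 / a) := by gcongr

lemma log_one_add_inv_le_two_mul_log_one_add_inv_sq {a : ℝ} (ha : 0 < a) (ha2 : a ≤ 2) :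
    log (1 + 1 / a) ≤ 2 * log (1 + 1 / a ^ 2) := by
  rw [← Nat.cast_ofNat, ← log_pow]
  gcongr
  have : 1 / a ≤ 2 / a ^ 2 := by
    rw [div_le_div_iff₀ ha (by positivity)]
    nlinarith
  have : (1 + 1 / a ^ 2) ^ 2 = 1 + 2 / a ^ 2 + 1 / a ^ 2 / a ^ 2 := by ring
  have : 0 ≤ 1 / a ^ 2 / a ^ 2 := by positivity
  linarith

theorem stmt4_general :
    ∃ C : ℝ, 0 < C ∧ ∀ n : ℕ, 1 ≤ n → ∀ η : ℝ, 0 < η ^ 2 → η ^ 2 < 8 →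
      (1 / ((n : ℝ) + 1)) * ∑ j ∈ Finset.range (n + 1),
          |Real.sin (Real.pi * j / (n + 1))| /
            (|η| + Real.sin (Real.pi * j / (n + 1)) ^ 2)
        ≤ C * Real.log (1 + 1 / |η|) := by
  refine ⟨4, by norm_num, fun n _ η hη0 hη8 => ?_⟩
  have hη : 0 < |η| := abs_pos.2 (sq_pos_iff.1 hη0)
  obtain ⟨a, ha, hηa⟩ : ∃ a, 0 < a ∧ |η| = a ^ 2 := ⟨√|η|, sqrt_pos.2 hη, (sq_sqrt hη.le).symm⟩
  have ha2 : a ≤ 2 := by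
    have : a ^ 4 < 8 := by rw [← sq_abs, hηa] at hη8; linarith
    nlinarith [sq_nonneg (a ^ 2 - 4), sq_nonneg (a - 2)]
  rw [hηa]
  calc _ ≤ 2 * log (1 + 1 / a) := average_abs_sin_div_le a ha n
    _ ≤ 2 * (2 * log (1 + 1 / a ^ 2)) := by
        gcongr; exact log_one_add_inv_le_two_mul_log_one_add_inv_sq ha ha2
    _ = 4 * log (1 + 1 / a ^ 2) := by ring

/-- There is `C > 0` such that for all `n ≥ 1` and `0 < η² < 8`,
`(1/(n+1)) ∑_{k ∈ T̂_n} |sin(πk)|/(|η| + sin²(πk)) ≤ C log(1 + 1/|η|)`. -/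
theorem stmt4 (γ : ℝ) (hγ : 0 < γ) :
    ∃ C : ℝ, 0 < C ∧ ∀ n : ℕ, 1 ≤ n → ∀ η : ℝ, 0 < η ^ 2 → η ^ 2 < 8 →
      (1 / ((n : ℝ) + 1)) * ∑ j ∈ Finset.range (n + 1),
          |Real.sin (Real.pi * j / (n + 1))| /
            (|η| + Real.sin (Real.pi * j / (n + 1)) ^ 2)
        ≤ C * Real.log (1 + 1 / |η|) :=
  stmt4_general
end

section
/- For every w ∈ ℂ with w ∉ [−1,1] (as a subset of ℝ ⊂ ℂ) and every integer n ≥ 1, letting Φ_+(w) denote the unique solution z with |z| < 1 of z + 1/z = 2w, one has the identity: (1/(n+1)) Σ_{k ∈ T̂_n} e^{2πik} / (e^{4πik} − 2w e^{2πik} + 1) = (Φ_+(w)^{n+1} + 1)·Φ_+(w) / [(Φ_+(w)² − 1)(1 − Φ_+(w)^{n+1})]. -/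
/-!
Writing `2w = z + z⁻¹`, the denominator factors as `(ζ - z)(ζ - z⁻¹)` at every `(n+1)`-th root
of unity `ζ`, so each summand splits into partial fractions in `z` and `z⁻¹`. For an `N`-th root
of unity `x` and `a ^ N ≠ 1`, the geometric sum gives
`(x - a)⁻¹ = (∑_{m<N} x ^ m a ^ (N-1-m)) / (1 - a ^ N)`; summing over all `N`-th roots of unity
kills every term with `0 < m < N`, leaving `∑ (x - a)⁻¹ = N a ^ (N-1) / (1 - a ^ N)`.
-/

open Finset Complex

theorem div_sub_mul_sub_eq {K : Type*} [Field K] {x z u : K} (hxz : x ≠ z) (hxu : x ≠ u)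
    (hzu : z ≠ u) :
    x / ((x - z) * (x - u)) = (z / (x - z) - u / (x - u)) / (z - u) := by
  have h1 : x - z ≠ 0 := sub_ne_zero.mpr hxz
  have h2 : x - u ≠ 0 := sub_ne_zero.mpr hxu
  have h3 : z - u ≠ 0 := sub_ne_zero.mpr hzu
  field_simp
  ring

namespace IsPrimitiveRoot

variable {K : Type*} [Field K] {ζ : K} {N : ℕ}

theorem sum_pow_pow_eq_zero (hζ : IsPrimitiveRoot ζ N) {m : ℕ} (hm0 : m ≠ 0) (hmN : m < N) :
    ∑ j ∈ range N, (ζ ^ j) ^ m = 0 := by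
  have hne : ζ ^ m ≠ 1 := hζ.pow_ne_one_of_pos_of_lt hm0 hmN
  have hpow : (ζ ^ m) ^ N = 1 := by rw [pow_right_comm, hζ.pow_eq_one, one_pow]
  simp_rw [← pow_mul, mul_comm _ m, pow_mul]
  rw [geom_sum_eq hne, hpow, sub_self, zero_div]

theorem sum_inv_pow_sub (hζ : IsPrimitiveRoot ζ N) {a : K} (ha : a ^ N ≠ 1) :
    ∑ j ∈ range N, (ζ ^ j - a)⁻¹ = N * a ^ (N - 1) / (1 - a ^ N) := by
  have hden : 1 - a ^ N ≠ 0 := sub_ne_zero.mpr ha.symm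
  have hinv (j : ℕ) : (ζ ^ j - a)⁻¹
      = (∑ m ∈ range N, (ζ ^ j) ^ m * a ^ (N - 1 - m)) / (1 - a ^ N) := by
    have hroot : (ζ ^ j) ^ N = 1 := by rw [pow_right_comm, hζ.pow_eq_one, one_pow]
    have hsub : ζ ^ j - a ≠ 0 := fun h => ha (by rw [← sub_eq_zero.mp h, hroot])
    rw [inv_eq_one_div, div_eq_div_iff hsub hden, one_mul, geom_sum₂_mul, hroot]
  rw [sum_congr rfl fun j _ => hinv j, ← sum_div, sum_comm]
  simp_rw [← sum_mul]
  congr 1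
  rw [sum_eq_single 0 (fun m _ hm => by rw [hζ.sum_pow_pow_eq_zero hm (by simp_all), zero_mul])
    (fun h => by simp_all)]
  simp

theorem sum_div_sq_sub_mul_add_one (hζ : IsPrimitiveRoot ζ N) {z : K} (hz : z ≠ 0)
    (hzN : z ^ N ≠ 1) (hz2 : z ^ 2 ≠ 1) :
    ∑ j ∈ range N, ζ ^ j / ((ζ ^ j) ^ 2 - (z + z⁻¹) * ζ ^ j + 1)
      = N * z * (z ^ N + 1) / ((z ^ 2 - 1) * (1 - z ^ N)) := by
  have hzN' : z⁻¹ ^ N ≠ 1 := by rwa [inv_pow, inv_ne_one]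
  have hzz : z ≠ z⁻¹ := fun h => hz2 (by rw [sq, ← mul_inv_cancel₀ hz, ← h])
  have hroot (j : ℕ) : (ζ ^ j) ^ N = 1 := by
    rw [pow_right_comm, hζ.pow_eq_one, one_pow]
  have hterm (j : ℕ) : ζ ^ j / ((ζ ^ j) ^ 2 - (z + z⁻¹) * ζ ^ j + 1)
      = (z * (ζ ^ j - z)⁻¹ - z⁻¹ * (ζ ^ j - z⁻¹)⁻¹) / (z - z⁻¹) := by
    have hfac : (ζ ^ j) ^ 2 - (z + z⁻¹) * ζ ^ j + 1 = (ζ ^ j - z) * (ζ ^ j - z⁻¹) := by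
      field_simp; ring
    rw [hfac, div_sub_mul_sub_eq
      (fun h => hzN (by rw [← h, hroot])) (fun h => hzN' (by rw [← h, hroot])) hzz]
    simp only [div_eq_mul_inv]
  rw [sum_congr rfl fun j _ => hterm j, ← sum_div, sum_sub_distrib, ← mul_sum, ← mul_sum,
    hζ.sum_inv_pow_sub hzN, hζ.sum_inv_pow_sub hzN']
  obtain ⟨n, rfl⟩ : ∃ n, N = n + 1 := Nat.exists_eq_succ_of_ne_zero (by rintro rfl; simp at hzN)
  have h1 : 1 - z ^ (n + 1) ≠ 0 := sub_ne_zero.mpr (Ne.symm hzN)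
  have h2 : z ^ (n + 1) - 1 ≠ 0 := sub_ne_zero.mpr hzN
  have h3 : z ^ 2 - 1 ≠ 0 := sub_ne_zero.mpr hz2
  simp only [inv_pow, Nat.add_sub_cancel]
  field_simp
  ring

end IsPrimitiveRoot

theorem pow_ne_one_of_norm_lt_one {𝕜 : Type*} [NormedDivisionRing 𝕜] {z : 𝕜} (hz : ‖z‖ < 1)
    {k : ℕ} (hk : k ≠ 0) : z ^ k ≠ 1 := fun h => by
  simpa [h] using pow_lt_one₀ (norm_nonneg z) hz hk |>.trans_eq' (norm_pow z k).symm

theorem stmt10_general (w : ℂ)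
    (z : ℂ) (hz0 : z ≠ 0) (hz1 : ‖z‖ < 1) (hzw : z + 1 / z = 2 * w)
    (n : ℕ) :
    (1 / ((n : ℂ) + 1)) * ∑ j ∈ Finset.range (n + 1),
        Complex.exp (2 * Real.pi * Complex.I * j / (n + 1)) /
          (Complex.exp (4 * Real.pi * Complex.I * j / (n + 1))
            - 2 * w * Complex.exp (2 * Real.pi * Complex.I * j / (n + 1)) + 1)
      = ((z ^ (n + 1) + 1) * z) / ((z ^ 2 - 1) * (1 - z ^ (n + 1))) := by
  set ζ := Complex.exp (2 * Real.pi * Complex.I / (n + 1))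
  have hζ : IsPrimitiveRoot ζ (n + 1) := by
    simpa using Complex.isPrimitiveRoot_exp (n + 1) n.succ_ne_zero
  have hexp (j : ℕ) : Complex.exp (2 * Real.pi * Complex.I * j / (n + 1)) = ζ ^ j := by
    rw [← Complex.exp_nat_mul]; ring_nf
  have hexp4 (j : ℕ) : Complex.exp (4 * Real.pi * Complex.I * j / (n + 1)) = (ζ ^ j) ^ 2 := by
    rw [← pow_mul, ← Complex.exp_nat_mul]; push_cast; ring_nf
  simp_rw [hexp, hexp4, ← hzw, one_div z]
  rw [hζ.sum_div_sq_sub_mul_add_one hz0 (pow_ne_one_of_norm_lt_one hz1 n.succ_ne_zero)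
    (pow_ne_one_of_norm_lt_one hz1 two_ne_zero)]
  have hn : (n : ℂ) + 1 ≠ 0 := by exact_mod_cast n.succ_ne_zero
  push_cast
  field_simp

/-- For `w ∈ ℂ ∖ [−1,1]` and `z` the unique solution with `|z| < 1` of
`z + 1/z = 2w`, one has
`(1/(n+1)) ∑_{k ∈ T̂_n} e^{2πik}/(e^{4πik} − 2w e^{2πik} + 1)
  = (z^{n+1}+1)·z / ((z²−1)(1−z^{n+1}))`. -/
theorem stmt10 (w : ℂ) (hw : ∀ x : ℝ, x ∈ Set.Icc (-1 : ℝ) 1 → (x : ℂ) ≠ w)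
    (z : ℂ) (hz0 : z ≠ 0) (hz1 : ‖z‖ < 1) (hzw : z + 1 / z = 2 * w)
    (n : ℕ) (hn : 1 ≤ n) :
    (1 / ((n : ℂ) + 1)) * ∑ j ∈ Finset.range (n + 1),
        Complex.exp (2 * Real.pi * Complex.I * j / (n + 1)) /
          (Complex.exp (4 * Real.pi * Complex.I * j / (n + 1))
            - 2 * w * Complex.exp (2 * Real.pi * Complex.I * j / (n + 1)) + 1)
      = ((z ^ (n + 1) + 1) * z) / ((z ^ 2 - 1) * (1 - z ^ (n + 1))) :=
  stmt10_general w z hz0 hz1 hzw n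
end

section
/- Let c_n(η) := (1/(n+1)) Σ_{k ∈ T̂_n} (1 + cos(2πk)) / (−η² + 4 sin²(πk) + 2iγη). Then there exists C > 0 depending only on γ such that |c_n(η)| ≤ C/(|η| + η²) for all η ≠ 0 and n ≥ 1. -/
open Finset Complex

/-! The imaginary part `2γη` of each denominator gives `|denominator| ≥ 2γ|η|`, which controls
the term for small `|η|`; for `η² > 8` the real part `-η² + 4 sin²` has modulus at least
`η² - 4 ≥ η² / 2`. As `|1 + cos| ≤ 2`, every term is bounded by `C / (|η| + η²)`, and so is
their average. -/

theorem norm_one_div_card_mul_sum_le {𝕜 ι : Type*} [RCLike 𝕜] {s : Finset ι} {f : ι → 𝕜}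
    {B : ℝ} (hs : s.Nonempty) (hf : ∀ i ∈ s, ‖f i‖ ≤ B) :
    ‖(1 / (#s : 𝕜)) * ∑ i ∈ s, f i‖ ≤ B := by
  have hcard : (0 : ℝ) < #s := by exact_mod_cast hs.card_pos
  calc ‖(1 / (#s : 𝕜)) * ∑ i ∈ s, f i‖ = ‖∑ i ∈ s, f i‖ / #s := by
        rw [norm_mul, norm_div, norm_one, RCLike.norm_natCast, one_div_mul_eq_div]
    _ ≤ (#s * B) / #s := by
        gcongr
        simpa using norm_sum_le_of_le s hf
    _ = B := by field_simp

theorem norm_one_add_cos_le_two (θ : ℝ) : ‖(1 : ℂ) + (Real.cos θ : ℂ)‖ ≤ 2 := by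
  rw [← ofReal_one, ← ofReal_add, norm_real, Real.norm_eq_abs,
    abs_of_nonneg (by linarith [Real.neg_one_le_cos θ])]
  linarith [Real.cos_le_one θ]

section Denominator

variable (γ η s : ℝ)

theorem two_mul_abs_mul_abs_le_norm_denom :
    2 * |γ| * |η| ≤ ‖-(η : ℂ) ^ 2 + 4 * (s : ℂ) ^ 2 + 2 * I * γ * η‖ := by
  have him : (-(η : ℂ) ^ 2 + 4 * (s : ℂ) ^ 2 + 2 * I * γ * η).im = 2 * γ * η := by
    simp [← ofReal_pow]
  calc 2 * |γ| * |η| = |2 * γ * η| := by rw [abs_mul, abs_mul, abs_two]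
    _ ≤ _ := him ▸ abs_im_le_norm _

theorem sq_sub_four_le_norm_denom (hs : s ^ 2 ≤ 1) :
    η ^ 2 - 4 ≤ ‖-(η : ℂ) ^ 2 + 4 * (s : ℂ) ^ 2 + 2 * I * γ * η‖ := by
  have hre : (-(η : ℂ) ^ 2 + 4 * (s : ℂ) ^ 2 + 2 * I * γ * η).re = -η ^ 2 + 4 * s ^ 2 := by
    simp [← ofReal_pow]
  linarith [neg_abs_le (-η ^ 2 + 4 * s ^ 2), hre ▸ abs_re_le_norm
    (-(η : ℂ) ^ 2 + 4 * (s : ℂ) ^ 2 + 2 * I * γ * η)]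

end Denominator

theorem two_div_le_of_two_mul_le_of_sq_sub_four_le {γ x a : ℝ} (hγ : 0 < γ) (hx : 0 < x)
    (h₁ : 2 * γ * x ≤ a) (h₂ : x ^ 2 - 4 ≤ a) :
    2 / a ≤ (8 + 4 / γ) / (x + x ^ 2) := by
  have ha : 0 < a := lt_of_lt_of_le (by positivity) h₁
  have hγa : 8 * x ≤ 4 / γ * a := by
    calc 8 * x = 4 / γ * (2 * γ * x) := by field_simp; ring
      _ ≤ 4 / γ * a := by gcongr
  rw [div_le_div_iff₀ ha (by positivity)]
  rcases le_or_gt (x ^ 2) 8 with hx₈ | hx₈ <;> nlinarith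

theorem norm_one_add_cos_div_denom_le {γ η : ℝ} (hγ : 0 < γ) (hη : η ≠ 0) (θ s : ℝ)
    (hs : s ^ 2 ≤ 1) :
    ‖(1 + (Real.cos θ : ℂ)) / (-(η : ℂ) ^ 2 + 4 * (s : ℂ) ^ 2 + 2 * I * γ * η)‖
      ≤ (8 + 4 / γ) / (|η| + η ^ 2) := by
  have h₁ := two_mul_abs_mul_abs_le_norm_denom γ η s
  have h₂ := sq_sub_four_le_norm_denom γ η s hs
  rw [abs_of_pos hγ] at h₁
  rw [← sq_abs η] at h₂ ⊢
  rw [norm_div]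
  calc _ ≤ 2 / ‖-(η : ℂ) ^ 2 + 4 * (s : ℂ) ^ 2 + 2 * I * γ * η‖ := by
        gcongr
        exact norm_one_add_cos_le_two θ
    _ ≤ _ := two_div_le_of_two_mul_le_of_sq_sub_four_le hγ (abs_pos.mpr hη) h₁ h₂

/-- With `c_n(η) = (1/(n+1)) ∑_k (1 + cos(2πk))/(−η² + 4 sin²(πk) + 2iγη)`,
there is `C > 0` depending only on `γ` with `|c_n(η)| ≤ C/(|η| + η²)`
for all `η ≠ 0` and `n ≥ 1`. -/
theorem stmt12 (γ : ℝ) (hγ : 0 < γ) :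
    ∃ C : ℝ, 0 < C ∧ ∀ η : ℝ, η ≠ 0 → ∀ n : ℕ, 1 ≤ n →
      ‖(1 / ((n : ℂ) + 1)) * ∑ j ∈ Finset.range (n + 1),
          (1 + ((Real.cos (2 * Real.pi * j / (n + 1)) : ℝ) : ℂ)) /
            (-(η : ℂ) ^ 2 + 4 * ((Real.sin (Real.pi * j / (n + 1)) : ℝ) : ℂ) ^ 2
              + 2 * Complex.I * (γ : ℂ) * (η : ℂ))‖
        ≤ C / (|η| + η ^ 2) := by
  refine ⟨8 + 4 / γ, by positivity, fun η hη n _ => ?_⟩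
  have h := norm_one_div_card_mul_sum_le (nonempty_range_add_one (n := n))
    fun j _ => norm_one_add_cos_div_denom_le hγ hη (2 * Real.pi * j / (n + 1))
      (Real.sin (Real.pi * j / (n + 1))) (Real.sin_sq_le_one _)
  simpa only [card_range, Nat.cast_add, Nat.cast_one] using h
end

section
/- Let Φ_+(w) = w − √(w²−1) with the branch of square root mapping ℂ∖(−∞,0] into the open right half-plane. Then there exists δ > 0 and a constant c > 0 such that for all real η with 0 < η² ≤ δ: |Φ_+(1 − η²/2 + iγη)| ≤ 1 − c√|η|. -/
open Complex

/-!
Since `Φ₊(w) · (w + √(w² − 1)) = 1`, it suffices to show `Re (w + √(w² − 1)) ≥ 1 + a` with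
`a = √(γ|η|)/4`. For `w = 1 − η²/2 + iγη` the number `z = w² − 1` has imaginary part of size
`2γ|η|` but real part only `O(η²)`, so `Re √z = √((|z| + Re z)/2) ≥ √(γ|η|)/2`, which dominates
the loss `η²/2` in `Re w`.
-/

noncomputable def phiPlus (w : ℂ) : ℂ := w - (w ^ 2 - 1) ^ ((1 : ℂ) / 2)

lemma phiPlus_mul_add_cpow (w : ℂ) : phiPlus w * (w + (w ^ 2 - 1) ^ ((1 : ℂ) / 2)) = 1 := by
  have hsq : ((w ^ 2 - 1) ^ ((1 : ℂ) / 2)) ^ 2 = w ^ 2 - 1 := by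
    rw [one_div]; exact cpow_ofNat_inv_pow _ 2
  rw [phiPlus]
  linear_combination -hsq

lemma norm_phiPlus_le_one_sub {w : ℂ} {a : ℝ} (ha₀ : 0 ≤ a) (ha₁ : a ≤ 1)
    (h : 1 + a ≤ (w + (w ^ 2 - 1) ^ ((1 : ℂ) / 2)).re) : ‖phiPlus w‖ ≤ 1 - a / 2 := by
  set v := w + (w ^ 2 - 1) ^ ((1 : ℂ) / 2)
  have hv : 1 + a ≤ ‖v‖ := h.trans (re_le_norm v)
  have hprod : ‖phiPlus w‖ * ‖v‖ = 1 := by rw [← norm_mul, phiPlus_mul_add_cpow, norm_one]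
  calc ‖phiPlus w‖ = 1 / ‖v‖ := by rw [eq_div_iff (by linarith)]; exact hprod
    _ ≤ 1 / (1 + a) := one_div_le_one_div_of_le (by positivity) hv
    _ ≤ 1 - a / 2 := by rw [div_le_iff₀ (by positivity)]; nlinarith

lemma abs_two_mul_re_mul_im_add_le (w : ℂ) :
    |2 * w.re * w.im| + (w.re ^ 2 - w.im ^ 2 - 1) ≤ ‖w ^ 2 - 1‖ + (w ^ 2 - 1).re := by
  have him := abs_im_le_norm (w ^ 2 - 1)
  simp only [sub_im, sub_re, pow_two, mul_im, mul_re, one_im, one_re, sub_zero] at him ⊢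
  rw [show w.re * w.im + w.im * w.re = 2 * w.re * w.im by ring] at him
  linarith

lemma norm_phiPlus_le_of_mul_abs_le {γ η : ℝ} (h : (1 + γ ^ 2) * |η| ≤ γ / 2) :
    ‖phiPlus (1 - (η : ℂ) ^ 2 / 2 + I * γ * η)‖ ≤ 1 - Real.sqrt γ / 8 * Real.sqrt |η| := by
  set t := |η|
  set w : ℂ := 1 - (η : ℂ) ^ 2 / 2 + I * γ * η
  have ht : 0 ≤ t := abs_nonneg η
  have hη : η ^ 2 = t ^ 2 := (sq_abs η).symm
  have hγ : 0 ≤ γ := by nlinarith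
  have ht₁ : t ≤ 1 / 4 := by nlinarith [sq_nonneg (γ - 1)]
  have htγ : t ≤ γ / 2 := by nlinarith
  have hγt : γ * t ≤ 1 / 2 := by nlinarith [sq_nonneg (γ - 1)]
  have hre : w.re = 1 - t ^ 2 / 2 := by rw [← hη]; simp [w, pow_two]
  have him : w.im = γ * η := by simp [w, pow_two]
  -- `|Im (w² − 1)| = γ t (2 − t²)` beats `Re (w² − 1) = −(1 + γ²) t² + t⁴/4`.
  have hz : γ * t / 2 ≤ ‖w ^ 2 - 1‖ + (w ^ 2 - 1).re := by
    have hlow := abs_two_mul_re_mul_im_add_le w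
    have habs : |2 * w.re * w.im| = γ * t * (2 - t ^ 2) := by
      rw [hre, him, abs_mul, abs_of_nonneg (by nlinarith : 0 ≤ 2 * (1 - t ^ 2 / 2)), abs_mul,
        abs_of_nonneg hγ]
      ring
    rw [habs, hre, him, mul_pow, hη] at hlow
    nlinarith [mul_nonneg (mul_nonneg hγ ht) (sq_nonneg t)]
  have hγt₀ : 0 ≤ γ * t := mul_nonneg hγ ht
  set a := Real.sqrt (γ * t) / 4
  have ha₀ : 0 ≤ a := by positivity
  have ha_sq : a ^ 2 = γ * t / 16 := by
    simp only [a]; rw [div_pow, Real.sq_sqrt hγt₀]; norm_num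
  have hs : 2 * a ≤ ((w ^ 2 - 1) ^ ((1 : ℂ) / 2)).re := by
    rw [one_div, cpow_inv_two_re, Real.le_sqrt (by positivity) (by linarith)]
    linarith
  have hloss : t ^ 2 / 2 ≤ a := by
    have ht₂ : t ^ 2 ≤ 1 / 16 := by nlinarith
    have ht₃ : 4 * t ^ 3 ≤ γ := by nlinarith [mul_le_mul_of_nonneg_left ht₂ ht]
    nlinarith [mul_le_mul_of_nonneg_left ht₃ ht]
  have ha₁ : a ≤ 1 := by nlinarith
  have hbound := norm_phiPlus_le_one_sub ha₀ ha₁ (by rw [add_re, hre]; linarith)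
  have ha : a / 2 = Real.sqrt γ / 8 * Real.sqrt t := by
    simp only [a]; rw [Real.sqrt_mul hγ]; ring
  rwa [ha] at hbound

/-- With `Φ₊(w) = w − (w²−1)^{1/2}` (principal branch), there exist `δ > 0` and
`c > 0` such that for all real `η` with `0 < η² ≤ δ`,
`|Φ₊(1 − η²/2 + iγη)| ≤ 1 − c√|η|`. -/
theorem stmt17 (γ : ℝ) (hγ : 0 < γ) :
    ∃ δ : ℝ, 0 < δ ∧ ∃ c : ℝ, 0 < c ∧ ∀ η : ℝ, 0 < η ^ 2 → η ^ 2 ≤ δ →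
      ‖((1 : ℂ) - (η : ℂ) ^ 2 / 2 + Complex.I * (γ : ℂ) * (η : ℂ))
          - (((1 : ℂ) - (η : ℂ) ^ 2 / 2 + Complex.I * (γ : ℂ) * (η : ℂ)) ^ 2 - 1)
              ^ ((1 : ℂ) / 2)‖
        ≤ 1 - c * Real.sqrt |η| := by
  set r := γ / (2 * (1 + γ ^ 2))
  have hr : 0 < r := by positivity
  refine ⟨r ^ 2, by positivity, Real.sqrt γ / 8, by positivity, fun η _ hη => ?_⟩
  have hηr : |η| ≤ r := by simpa [abs_of_pos hr] using sq_le_sq.mp hη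
  apply norm_phiPlus_le_of_mul_abs_le
  calc (1 + γ ^ 2) * |η| ≤ (1 + γ ^ 2) * r := by gcongr
    _ = γ / 2 := by simp only [r]; field_simp
end
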